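/- arXiv:2010.12292 — 4 statements merged into one kernel-verified Lean document; each statement's English description precedes it below -/
import Mathlib

section
/- Let f = (1/n)∑ᵢ fᵢ where each fᵢ : R^d → R is convex, differentiable, and L-smooth, and let x* be a minimizer of f. Then for every x in R^d, (1/n)∑ᵢ ‖∇fᵢ(x)‖² ≤ 4L(f(x) − f(x*)) + (2/n)∑ᵢ ‖∇fᵢ(x*)‖². -/
/-!
Convexity and `L`-smoothness make each gradient cocoercive in the form
`‖∇fᵢ x - ∇fᵢ y‖² ≤ 2L (fᵢ x - fᵢ y - ⟪∇fᵢ y, x - y⟫)`: the tilted function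
`fᵢ - ⟪∇fᵢ y, ·⟫` is minimal at `y`, and the descent lemma bounds its decrease along one
gradient step of length `1 / L` from `x`. Together with `‖a‖² ≤ 2‖a - b‖² + 2‖b‖²` at `y = x*`
this bounds each `‖∇fᵢ x‖²`; averaging over `i`, the linear terms cancel because the
gradients `∇fᵢ x*` average to zero.
-/

open scoped RealInnerProductSpace
open InnerProductSpace Set

section Smooth

variable {E : Type*} [NormedAddCommGroup E] [InnerProductSpace ℝ E] [CompleteSpace E]
  {f : E → ℝ} {g : E → E} {g' : E} {L : ℝ}

theorem HasGradientAt.hasDerivAt_comp_add_smul {x v : E} {t : ℝ}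
    (hf : HasGradientAt f g' (x + t • v)) :
    HasDerivAt (fun s : ℝ => f (x + s • v)) ⟪g', v⟫ t := by
  have hline : HasDerivAt (fun s : ℝ => x + s • v) v t := by
    simpa using ((hasDerivAt_id t).smul_const v).const_add x
  simpa [toDual_apply_apply, Function.comp_def] using
    (hasGradientAt_iff_hasFDerivAt.mp hf).comp_hasDerivAt t hline

theorem ConvexOn.add_inner_le_of_hasGradientAt (hconv : ConvexOn ℝ univ f) {x : E}
    (hf : HasGradientAt f g' x) (y : E) : f x + ⟪g', y - x⟫ ≤ f y := by
  have hline : ConvexOn ℝ univ (fun t : ℝ => f (x + t • (y - x))) := by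
    simpa [Function.comp_def, AffineMap.lineMap_apply, add_comm] using
      hconv.comp_affineMap (AffineMap.lineMap x y : ℝ →ᵃ[ℝ] E)
  have hderiv : HasDerivAt (fun t : ℝ => f (x + t • (y - x))) ⟪g', y - x⟫ 0 :=
    HasGradientAt.hasDerivAt_comp_add_smul (by simpa using hf)
  have hslope := hline.le_slope_of_hasDerivAt (mem_univ 0) (mem_univ 1) one_pos hderiv
  simp only [slope_def_field, zero_smul, add_zero, one_smul, add_sub_cancel] at hslope
  linarith

theorem le_add_inner_add_of_lipschitz_gradient (hgrad : ∀ z, HasGradientAt f (g z) z)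
    (hlip : ∀ a b, ‖g a - g b‖ ≤ L * ‖a - b‖) (x y : E) :
    f y ≤ f x + ⟪g x, y - x⟫ + L / 2 * ‖y - x‖ ^ 2 := by
  set v := y - x
  set φ : ℝ → ℝ := fun t => f (x + t • v) - t * ⟪g x, v⟫ - L / 2 * t ^ 2 * ‖v‖ ^ 2
  have hφ : ∀ t : ℝ, HasDerivAt φ (⟪g (x + t • v) - g x, v⟫ - L * t * ‖v‖ ^ 2) t := by
    intro t
    refine ((((hgrad (x + t • v)).hasDerivAt_comp_add_smul).sub
      ((hasDerivAt_id t).mul_const ⟪g x, v⟫)).sub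
      (((hasDerivAt_pow 2 t).const_mul (L / 2)).mul_const (‖v‖ ^ 2))).congr_deriv ?_
    rw [inner_sub_left]
    ring
  have hanti : AntitoneOn φ (Icc 0 1) := by
    refine antitoneOn_of_hasDerivWithinAt_nonpos (convex_Icc 0 1)
      (fun t _ => (hφ t).continuousAt.continuousWithinAt)
      (fun t _ => (hφ t).hasDerivWithinAt) fun t ht => ?_
    rw [interior_Icc] at ht
    have hbound : ⟪g (x + t • v) - g x, v⟫ ≤ L * t * ‖v‖ ^ 2 :=
      calc ⟪g (x + t • v) - g x, v⟫ ≤ ‖g (x + t • v) - g x‖ * ‖v‖ := real_inner_le_norm _ _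
        _ ≤ L * ‖x + t • v - x‖ * ‖v‖ := by gcongr; exact hlip _ _
        _ = L * t * ‖v‖ ^ 2 := by
          rw [add_sub_cancel_left, norm_smul, Real.norm_of_nonneg ht.1.le]; ring
    linarith
  have h01 := hanti (left_mem_Icc.mpr zero_le_one) (right_mem_Icc.mpr zero_le_one) zero_le_one
  simp only [φ, v, zero_smul, add_zero, one_smul, add_sub_cancel] at h01
  linarith

theorem HasGradientAt.sub_inner {x : E} (hf : HasGradientAt f g' x) (c : E) :
    HasGradientAt (fun z => f z - ⟪c, z⟫) (g' - c) x := by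
  rw [hasGradientAt_iff_hasFDerivAt, map_sub]
  exact (hasGradientAt_iff_hasFDerivAt.mp hf).sub (toDual ℝ E c).hasFDerivAt

theorem norm_sub_sq_le_of_convexOn_of_lipschitz_gradient (hconv : ConvexOn ℝ univ f)
    (hgrad : ∀ z, HasGradientAt f (g z) z) (hL : 0 < L)
    (hlip : ∀ a b, ‖g a - g b‖ ≤ L * ‖a - b‖) (x y : E) :
    ‖g x - g y‖ ^ 2 ≤ 2 * L * (f x - f y - ⟪g y, x - y⟫) := by
  set φ : E → ℝ := fun z => f z - ⟪g y, z⟫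
  set G : E → E := fun z => g z - g y
  have hφmin : ∀ z, φ y ≤ φ z := fun z => by
    have := hconv.add_inner_le_of_hasGradientAt (hgrad y) z
    simp only [φ, inner_sub_right] at this ⊢
    linarith
  -- `φ` is minimal at `y`, so one gradient step of length `1 / L` from `x` stays above `φ y`.
  have hstep := le_add_inner_add_of_lipschitz_gradient (f := φ) (g := G)
    (fun z => (hgrad z).sub_inner (g y))
    (fun a b => by simpa [G] using hlip a b) x (x - L⁻¹ • G x)
  rw [sub_sub_cancel_left, inner_neg_right, real_inner_smul_right, real_inner_self_eq_norm_sq,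
    norm_neg, norm_smul, mul_pow, Real.norm_eq_abs, sq_abs] at hstep
  have hdecrease : φ y ≤ φ x - ‖G x‖ ^ 2 / (2 * L) :=
    calc φ y ≤ φ (x - L⁻¹ • G x) := hφmin _
      _ ≤ _ := hstep
      _ = φ x - ‖G x‖ ^ 2 / (2 * L) := by field_simp; ring
  calc ‖g x - g y‖ ^ 2 = 2 * L * (‖G x‖ ^ 2 / (2 * L)) := by field_simp; rfl
    _ ≤ 2 * L * (φ x - φ y) := by gcongr; linarith
    _ = 2 * L * (f x - f y - ⟪g y, x - y⟫) := by simp only [φ, inner_sub_right]; ring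

theorem norm_sq_le_of_convexOn_of_lipschitz_gradient (hconv : ConvexOn ℝ univ f)
    (hgrad : ∀ z, HasGradientAt f (g z) z) (hL : 0 < L)
    (hlip : ∀ a b, ‖g a - g b‖ ≤ L * ‖a - b‖) (x y : E) :
    ‖g x‖ ^ 2 ≤ 4 * L * (f x - f y - ⟪g y, x - y⟫) + 2 * ‖g y‖ ^ 2 :=
  calc ‖g x‖ ^ 2 ≤ (‖g x - g y‖ + ‖g y‖) ^ 2 := by
        gcongr; simpa using norm_add_le (g x - g y) (g y)
    _ ≤ 2 * (‖g x - g y‖ ^ 2 + ‖g y‖ ^ 2) := add_sq_le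
    _ ≤ 4 * L * (f x - f y - ⟪g y, x - y⟫) + 2 * ‖g y‖ ^ 2 := by
        linarith [norm_sub_sq_le_of_convexOn_of_lipschitz_gradient hconv hgrad hL hlip x y]

end Smooth

theorem avg_grad_norm_sq_bound_general (d n : ℕ) (L : ℝ) (hL : 0 < L)
    (f : Fin n → EuclideanSpace ℝ (Fin d) → ℝ)
    (g : Fin n → EuclideanSpace ℝ (Fin d) → EuclideanSpace ℝ (Fin d))
    (hconv : ∀ i, ConvexOn ℝ Set.univ (f i))
    (hgrad : ∀ i x, HasGradientAt (f i) (g i x) x)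
    (hlip : ∀ i x y, ‖g i x - g i y‖ ≤ L * ‖x - y‖)
    (xstar : EuclideanSpace ℝ (Fin d))
    (hmin : ∀ y, (1 / n : ℝ) * ∑ i, f i xstar ≤ (1 / n : ℝ) * ∑ i, f i y)
    (x : EuclideanSpace ℝ (Fin d)) :
    (1 / n : ℝ) * ∑ i, ‖g i x‖ ^ 2 ≤
      4 * L * ((1 / n : ℝ) * ∑ i, f i x - (1 / n : ℝ) * ∑ i, f i xstar)
        + (2 / n : ℝ) * ∑ i, ‖g i xstar‖ ^ 2 := by
  have hstationary : (1 / n : ℝ) * ∑ i, ⟪g i xstar, x - xstar⟫ = 0 := by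
    have hline : HasDerivAt (fun t : ℝ => (1 / n : ℝ) * ∑ i, f i (xstar + t • (x - xstar)))
        ((1 / n : ℝ) * ∑ i, ⟪g i xstar, x - xstar⟫) 0 :=
      (HasDerivAt.fun_sum fun i _ =>
        HasGradientAt.hasDerivAt_comp_add_smul (x := xstar) (t := 0)
          (by simpa using hgrad i xstar)).const_mul _
    refine IsLocalMin.hasDerivAt_eq_zero ?_ hline
    exact IsMinOn.isLocalMin (fun t _ => by simpa using hmin _) Filter.univ_mem
  calc (1 / n : ℝ) * ∑ i, ‖g i x‖ ^ 2
      ≤ (1 / n : ℝ) * ∑ i, (4 * L * (f i x - f i xstar - ⟪g i xstar, x - xstar⟫)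
          + 2 * ‖g i xstar‖ ^ 2) := by
        gcongr with i
        exact norm_sq_le_of_convexOn_of_lipschitz_gradient (hconv i) (hgrad i) hL (hlip i) x xstar
    _ = _ := by
        simp only [Finset.sum_add_distrib, Finset.sum_sub_distrib, ← Finset.mul_sum]
        linear_combination (-4 * L) * hstationary

theorem avg_grad_norm_sq_bound (d n : ℕ) (hn : 0 < n) (L : ℝ) (hL : 0 < L)
    (f : Fin n → EuclideanSpace ℝ (Fin d) → ℝ)
    (g : Fin n → EuclideanSpace ℝ (Fin d) → EuclideanSpace ℝ (Fin d))
    (hconv : ∀ i, ConvexOn ℝ Set.univ (f i))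
    (hgrad : ∀ i x, HasGradientAt (f i) (g i x) x)
    (hlip : ∀ i x y, ‖g i x - g i y‖ ≤ L * ‖x - y‖)
    (xstar : EuclideanSpace ℝ (Fin d))
    (hmin : ∀ y, (1 / n : ℝ) * ∑ i, f i xstar ≤ (1 / n : ℝ) * ∑ i, f i y)
    (x : EuclideanSpace ℝ (Fin d)) :
    (1 / n : ℝ) * ∑ i, ‖g i x‖ ^ 2 ≤
      4 * L * ((1 / n : ℝ) * ∑ i, f i x - (1 / n : ℝ) * ∑ i, f i xstar)
        + (2 / n : ℝ) * ∑ i, ‖g i xstar‖ ^ 2 :=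
  avg_grad_norm_sq_bound_general d n L hL f g hconv hgrad hlip xstar hmin x
end

section
/- Suppose a nonnegative sequence (r_K) satisfies r_K ≤ a/(γK) + b₁γ/K + b₂γ²/K + c₁γ + c₂γ² for all K ≥ 1 and all stepsizes 0 < γ ≤ γ₀, where a > 0 and b₁, b₂, c₁, c₂ ≥ 0. Then choosing γ = min{γ₀, √(a/b₁), (a/b₂)^{1/3}, √(a/(c₁K)), (a/(c₂K))^{1/3}} gives r_K ≤ C·(a/(γ₀K) + √(a b₁)/K + (a² b₂)^{1/3}/K + √(a c₁/K) + (a² c₂)^{1/3}/K^{2/3}) for some absolute constant C. -/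
/-!
Take `γ⁻¹ = γ₀⁻¹ + ∑ i, sᵢ` with `sᵢ = (βᵢ / A) ^ (1 / (nᵢ + 1))`, the value at which `A / γ`
and `βᵢ γ ^ nᵢ` balance. Then `γ ≤ γ₀`, `A / γ = A / γ₀ + ∑ i, A sᵢ`, and since `γ sᵢ ≤ 1`,
`βᵢ γ ^ nᵢ = A sᵢ (γ sᵢ) ^ nᵢ ≤ A sᵢ = (A ^ nᵢ βᵢ) ^ (1 / (nᵢ + 1))`. The theorem is the case
`A = a / K` with the four terms `(b₁ / K) γ`, `(b₂ / K) γ ^ 2`, `c₁ γ`, `c₂ γ ^ 2`, and `C = 2`.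
-/

open Finset

lemma mul_pow_le_of_mul_le_one {A s γ : ℝ} (n : ℕ) (hA : 0 ≤ A) (hs : 0 ≤ s) (hγ : 0 ≤ γ)
    (hγs : γ * s ≤ 1) : A * s ^ (n + 1) * γ ^ n ≤ A * s :=
  calc A * s ^ (n + 1) * γ ^ n = A * s * (γ * s) ^ n := by ring
    _ ≤ A * s * 1 := by gcongr; exact pow_le_one₀ (by positivity) hγs
    _ = A * s := mul_one _

lemma mul_rpow_one_div_succ {A β : ℝ} (n : ℕ) (hA : 0 < A) (hβ : 0 ≤ β) :
    A * (β / A) ^ ((1 : ℝ) / (n + 1)) = (A ^ n * β) ^ ((1 : ℝ) / (n + 1)) := by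
  have hn : ((n : ℝ) + 1) ≠ 0 := by positivity
  rw [show A ^ n * β = A ^ (n + 1) * (β / A) by field_simp; ring,
    Real.mul_rpow (by positivity) (by positivity), ← Real.rpow_natCast,
    ← Real.rpow_mul hA.le]
  push_cast
  rw [mul_one_div_cancel hn, Real.rpow_one]

lemma rpow_one_div_succ_pow {x : ℝ} (n : ℕ) (hx : 0 ≤ x) :
    (x ^ ((1 : ℝ) / (n + 1))) ^ (n + 1) = x := by
  simpa [one_div] using Real.rpow_inv_natCast_pow hx n.succ_ne_zero

theorem exists_stepsize_div_add_sum_le {ι : Type*} (s : Finset ι) {A γ₀ : ℝ} (hA : 0 < A)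
    (hγ₀ : 0 < γ₀) (β : ι → ℝ) (hβ : ∀ i ∈ s, 0 ≤ β i) (n : ι → ℕ) :
    ∃ γ, 0 < γ ∧ γ ≤ γ₀ ∧
      A / γ + ∑ i ∈ s, β i * γ ^ n i ≤
        A / γ₀ + 2 * ∑ i ∈ s, (A ^ n i * β i) ^ ((1 : ℝ) / (n i + 1)) := by
  set σ : ι → ℝ := fun i ↦ (β i / A) ^ ((1 : ℝ) / (n i + 1))
  have hσ_nonneg : ∀ i ∈ s, 0 ≤ σ i := fun i hi ↦ by have := hβ i hi; positivity
  have ht : γ₀⁻¹ ≤ γ₀⁻¹ + ∑ i ∈ s, σ i := le_add_of_nonneg_right (sum_nonneg hσ_nonneg)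
  have ht₀ : 0 < γ₀⁻¹ + ∑ i ∈ s, σ i := (inv_pos.2 hγ₀).trans_le ht
  refine ⟨(γ₀⁻¹ + ∑ i ∈ s, σ i)⁻¹, inv_pos.2 ht₀, inv_le_of_inv_le₀ hγ₀ ht, ?_⟩
  have hγσ : ∀ i ∈ s, (γ₀⁻¹ + ∑ i ∈ s, σ i)⁻¹ * σ i ≤ 1 := fun i hi ↦ by
    rw [inv_mul_le_one₀ ht₀]
    exact (single_le_sum hσ_nonneg hi).trans (le_add_of_nonneg_left (inv_pos.2 hγ₀).le)
  have hterm : ∀ i ∈ s, β i * (γ₀⁻¹ + ∑ i ∈ s, σ i)⁻¹ ^ n i ≤ A * σ i := fun i hi ↦ by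
    have hβσ : β i = A * σ i ^ (n i + 1) := by
      rw [rpow_one_div_succ_pow _ (div_nonneg (hβ i hi) hA.le)]; field_simp
    rw [hβσ]
    exact mul_pow_le_of_mul_le_one _ hA.le (hσ_nonneg i hi) (by positivity) (hγσ i hi)
  have hAσ : ∀ i ∈ s, A * σ i = (A ^ n i * β i) ^ ((1 : ℝ) / (n i + 1)) := fun i hi ↦
    mul_rpow_one_div_succ _ hA (hβ i hi)
  calc A / (γ₀⁻¹ + ∑ i ∈ s, σ i)⁻¹ + ∑ i ∈ s, β i * (γ₀⁻¹ + ∑ i ∈ s, σ i)⁻¹ ^ n i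
      ≤ (A / γ₀ + ∑ i ∈ s, A * σ i) + ∑ i ∈ s, A * σ i := by
        rw [div_inv_eq_mul, mul_add, mul_sum, div_eq_mul_inv]
        exact (add_le_add_iff_left _).2 (sum_le_sum hterm)
    _ = A / γ₀ + 2 * ∑ i ∈ s, (A ^ n i * β i) ^ ((1 : ℝ) / (n i + 1)) := by
        rw [← sum_congr rfl hAσ]; ring

lemma rpow_div_pow {x k : ℝ} (m : ℕ) (y : ℝ) (hx : 0 ≤ x) (hk : 0 ≤ k) :
    (x / k ^ m) ^ y = x ^ y / k ^ (m * y) := by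
  rw [Real.div_rpow hx (by positivity), ← Real.rpow_natCast, ← Real.rpow_mul hk]

theorem stepsize_tuning_convex :
    ∃ C : ℝ, 0 < C ∧
      ∀ (γ₀ a b₁ b₂ c₁ c₂ : ℝ) (r : ℕ → ℝ),
        0 < γ₀ → 0 < a → 0 ≤ b₁ → 0 ≤ b₂ → 0 ≤ c₁ → 0 ≤ c₂ →
        (∀ K, 0 ≤ r K) →
        (∀ γ : ℝ, 0 < γ → γ ≤ γ₀ → ∀ K : ℕ, 1 ≤ K →
          r K ≤ a / (γ * K) + b₁ * γ / K + b₂ * γ ^ 2 / K + c₁ * γ + c₂ * γ ^ 2) →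
        ∀ K : ℕ, 1 ≤ K →
          r K ≤ C * (a / (γ₀ * K) + Real.sqrt (a * b₁) / K
                + (a ^ 2 * b₂) ^ ((1 : ℝ) / 3) / K
                + Real.sqrt (a * c₁ / (K : ℝ))
                + (a ^ 2 * c₂) ^ ((1 : ℝ) / 3) / (K : ℝ) ^ ((2 : ℝ) / 3)) := by
  refine ⟨2, two_pos, ?_⟩
  intro γ₀ a b₁ b₂ c₁ c₂ r hγ₀ ha hb₁ hb₂ hc₁ hc₂ _ hr K hK
  have hK₀ : (0 : ℝ) < K := by exact_mod_cast hK
  obtain ⟨γ, hγ, hγγ₀, hbound⟩ := exists_stepsize_div_add_sum_le univ (div_pos ha hK₀) hγ₀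
    ![b₁ / K, b₂ / K, c₁, c₂] (by intro i _; fin_cases i <;> simp <;> positivity) ![1, 2, 1, 2]
  simp only [Fin.sum_univ_four, Matrix.cons_val_zero, Matrix.cons_val_one, Matrix.cons_val_two,
    Matrix.cons_val_three] at hbound
  norm_num at hbound
  have e₁ : (a / K * (b₁ / K)) ^ ((1 : ℝ) / 2) = √(a * b₁) / K := by
    rw [show a / K * (b₁ / K) = a * b₁ / (K : ℝ) ^ 2 by ring,
      rpow_div_pow 2 _ (by positivity) hK₀.le, Real.sqrt_eq_rpow]
    norm_num
  have e₂ : ((a / K) ^ 2 * (b₂ / K)) ^ ((1 : ℝ) / 3) = (a ^ 2 * b₂) ^ ((1 : ℝ) / 3) / K := by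
    rw [show (a / K) ^ 2 * (b₂ / K) = a ^ 2 * b₂ / (K : ℝ) ^ 3 by ring,
      rpow_div_pow 3 _ (by positivity) hK₀.le]
    norm_num
  have e₃ : (a / K * c₁) ^ ((1 : ℝ) / 2) = √(a * c₁ / K) := by
    rw [Real.sqrt_eq_rpow, div_mul_eq_mul_div]
  have e₄ : ((a / K) ^ 2 * c₂) ^ ((1 : ℝ) / 3) =
      (a ^ 2 * c₂) ^ ((1 : ℝ) / 3) / (K : ℝ) ^ ((2 : ℝ) / 3) := by
    rw [show (a / K) ^ 2 * c₂ = a ^ 2 * c₂ / (K : ℝ) ^ 2 by ring,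
      rpow_div_pow 2 _ (by positivity) hK₀.le]
    norm_num
  have hγ₀K : 0 ≤ a / (γ₀ * K) := by positivity
  calc r K ≤ a / (γ * K) + b₁ * γ / K + b₂ * γ ^ 2 / K + c₁ * γ + c₂ * γ ^ 2 := hr γ hγ hγγ₀ K hK
    _ ≤ a / (γ₀ * K) + 2 * (√(a * b₁) / K + (a ^ 2 * b₂) ^ ((1 : ℝ) / 3) / K + √(a * c₁ / K)
          + (a ^ 2 * c₂) ^ ((1 : ℝ) / 3) / (K : ℝ) ^ ((2 : ℝ) / 3)) := by
        rw [← e₁, ← e₂, ← e₃, ← e₄]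
        convert hbound using 1 <;> ring
    _ ≤ _ := by linarith
end

section
/- Let f = (1/n)∑ᵢ fᵢ where fᵢ = (1/m)∑ⱼ f_{ij}, with each f_{ij} convex and L-smooth, and let x* minimize f. With l chosen uniformly from [m] on each worker i, define gᵢ = ∇f_{il}(x) − ∇f_{il}(wᵢ) + ∇fᵢ(wᵢ), and g = (1/n)∑ᵢ gᵢ. Then E[g] = ∇f(x) and E‖g‖² ≤ 4L(f(x) − f(x*)) + 2σ², where σ² = (1/(nm))∑ᵢ∑ⱼ‖∇f_{ij}(wᵢ) − ∇f_{ij}(x*)‖². -/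
/-!
Put `a_ij = ∇f_ij(x) - ∇f_ij(x*)` and `b_ij = ∇f_ij(w_i) - ∇f_ij(x*)`. Since `∑ ∇f_ij(x*) = 0`
at the minimiser, the estimator equals `(1/n) ∑_i (a_{i l_i} - (b_{i l_i} - (1/m) ∑_j b_ij))`,
and unbiasedness is immediate because each `l_i` is uniform. For the second moment use
`‖u - v‖² ≤ 2‖u‖² + 2‖v‖²`. The `a`-part is bounded by Jensen's inequality and by the
cocoercivity of gradients of convex `L`-smooth functions,
`‖∇h(x) - ∇h(x*)‖² ≤ 2L (h(x) - h(x*) - ⟪∇h(x*), x - x*⟫)`, whose inner-product terms cancel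
after summation. The centred `b`-part is a sum of independent mean-zero terms, so its cross
terms vanish and its second moment is at most `σ²`.
-/

open Finset Fintype
open scoped RealInnerProductSpace

section SmoothConvex

variable {E : Type*} [NormedAddCommGroup E] [InnerProductSpace ℝ E] [CompleteSpace E]

theorem HasGradientAt.sum {ι : Type*} {s : Finset ι} {f : ι → E → ℝ} {f' : ι → E} {x : E}
    (h : ∀ i ∈ s, HasGradientAt (f i) (f' i) x) :
    HasGradientAt (fun y ↦ ∑ i ∈ s, f i y) (∑ i ∈ s, f' i) x := by
  rw [hasGradientAt_iff_hasFDerivAt, map_sum]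
  exact HasFDerivAt.fun_sum fun i hi ↦ (h i hi).hasFDerivAt

theorem IsLocalMin.hasGradientAt_eq_zero {f : E → ℝ} {f' x : E} (h : IsLocalMin f x)
    (hf : HasGradientAt f f' x) : f' = 0 :=
  (InnerProductSpace.toDual ℝ E).map_eq_zero_iff.mp (h.hasFDerivAt_eq_zero hf.hasFDerivAt)

theorem ConvexOn.add_inner_gradient_le {f : E → ℝ} (hf : ConvexOn ℝ Set.univ f) {f' x : E}
    (hf' : HasGradientAt f f' x) (y : E) : f x + ⟪f', y - x⟫ ≤ f y := by
  have hline : ConvexOn ℝ Set.univ (f ∘ AffineMap.lineMap (k := ℝ) x y) := by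
    simpa using hf.comp_affineMap (AffineMap.lineMap x y)
  have hderiv : HasDerivAt (f ∘ AffineMap.lineMap (k := ℝ) x y) ⟪f', y - x⟫ 0 := by
    have hx : HasFDerivAt f (InnerProductSpace.toDual ℝ E f') (AffineMap.lineMap x y (0 : ℝ)) := by
      simpa using hf'.hasFDerivAt
    simpa using hx.comp_hasDerivAt (0 : ℝ) AffineMap.hasDerivAt_lineMap
  have hslope := hline.le_slope_of_hasDerivAt (Set.mem_univ 0) (Set.mem_univ 1) one_pos hderiv
  simp only [slope_def_field, Function.comp_apply, AffineMap.lineMap_apply_one,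
    AffineMap.lineMap_apply_zero, sub_zero, div_one] at hslope
  linarith

theorem sub_sub_inner_gradient_le_of_lipschitz {f : E → ℝ} {f' : E → E} {L : ℝ}
    (hf : ∀ x, HasGradientAt f (f' x) x) (hlip : ∀ x y, ‖f' x - f' y‖ ≤ L * ‖x - y‖) (x y : E) :
    f y - f x - ⟪f' x, y - x⟫ ≤ L / 2 * ‖y - x‖ ^ 2 := by
  let γ : ℝ → E := AffineMap.lineMap x y
  let ψ : ℝ → ℝ := fun t ↦ f (γ t) - t * ⟪f' x, y - x⟫ - L / 2 * t ^ 2 * ‖y - x‖ ^ 2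
  have hψ : ∀ t, HasDerivAt ψ (⟪f' (γ t) - f' x, y - x⟫ - L * t * ‖y - x‖ ^ 2) t := by
    intro t
    have hfγ := (hf (γ t)).hasFDerivAt.comp_hasDerivAt t AffineMap.hasDerivAt_lineMap
    refine ((hfγ.sub ((hasDerivAt_id t).mul_const ⟪f' x, y - x⟫)).sub
      (((hasDerivAt_pow 2 t).const_mul (L / 2)).mul_const (‖y - x‖ ^ 2))).congr_deriv ?_
    rw [InnerProductSpace.toDual_apply_apply, inner_sub_left]
    simp only [Nat.cast_ofNat, Nat.add_one_sub_one, pow_one]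
    ring
  have hψ_nonpos : ∀ t ∈ interior (Set.Icc (0 : ℝ) 1),
      ⟪f' (γ t) - f' x, y - x⟫ - L * t * ‖y - x‖ ^ 2 ≤ 0 := by
    intro t ht
    rw [interior_Icc] at ht
    have hγ : γ t - x = t • (y - x) := by simp [γ, AffineMap.lineMap_apply_module']
    refine sub_nonpos.2 ?_
    calc ⟪f' (γ t) - f' x, y - x⟫ ≤ ‖f' (γ t) - f' x‖ * ‖y - x‖ := real_inner_le_norm _ _
      _ ≤ L * (t * ‖y - x‖) * ‖y - x‖ := by
        gcongr
        simpa [hγ, norm_smul, abs_of_pos ht.1] using hlip (γ t) x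
      _ = L * t * ‖y - x‖ ^ 2 := by ring
  have hanti := antitoneOn_of_hasDerivWithinAt_nonpos (convex_Icc 0 1)
    (fun t _ ↦ (hψ t).continuousAt.continuousWithinAt) (fun t _ ↦ (hψ t).hasDerivWithinAt)
    hψ_nonpos
  have hψ01 := hanti (Set.left_mem_Icc.2 zero_le_one) (Set.right_mem_Icc.2 zero_le_one) zero_le_one
  simp only [ψ, γ, AffineMap.lineMap_apply_zero, AffineMap.lineMap_apply_one] at hψ01
  linarith

theorem ConvexOn.norm_sub_gradient_sq_le {f : E → ℝ} {f' : E → E} {L : ℝ}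
    (hconv : ConvexOn ℝ Set.univ f) (hf : ∀ x, HasGradientAt f (f' x) x) (hL : 0 < L)
    (hlip : ∀ x y, ‖f' x - f' y‖ ≤ L * ‖x - y‖) (x y : E) :
    ‖f' y - f' x‖ ^ 2 ≤ 2 * L * (f y - f x - ⟪f' x, y - x⟫) := by
  set Δ := f' y - f' x
  -- Compare the convexity lower bound at `x` with the smoothness upper bound at `y`, both taken
  -- at the gradient step `u`, which is the point optimising the resulting estimate.
  set u := y - L⁻¹ • Δ
  have hlower := hconv.add_inner_gradient_le (hf x) u
  have hupper := sub_sub_inner_gradient_le_of_lipschitz hf hlip y u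
  have hux : u - x = (y - x) - L⁻¹ • Δ := by simp only [u]; abel
  have huy : u - y = -(L⁻¹ • Δ) := by simp only [u]; abel
  rw [hux, inner_sub_right, real_inner_smul_right] at hlower
  rw [huy, inner_neg_right, real_inner_smul_right, norm_neg, norm_smul, Real.norm_of_nonneg
    (inv_nonneg.2 hL.le)] at hupper
  have hΔ : ⟪f' y, Δ⟫ - ⟪f' x, Δ⟫ = ‖Δ‖ ^ 2 := by
    rw [← inner_sub_left, real_inner_self_eq_norm_sq]
  have key : ‖Δ‖ ^ 2 / (2 * L) ≤ f y - f x - ⟪f' x, y - x⟫ := by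
    have : ‖Δ‖ ^ 2 / (2 * L) = L⁻¹ * (⟪f' y, Δ⟫ - ⟪f' x, Δ⟫) - L / 2 * (L⁻¹ * ‖Δ‖) ^ 2 := by
      rw [hΔ]; field_simp; ring
    linarith
  rwa [div_le_iff₀ (by positivity), mul_comm] at key

theorem sum_sum_norm_sub_gradient_sq_le {ι κ : Type*} [Fintype ι] [Fintype κ]
    {f : ι → κ → E → ℝ} {g : ι → κ → E → E} {L : ℝ} (hL : 0 < L)
    (hconv : ∀ i j, ConvexOn ℝ Set.univ (f i j))
    (hgrad : ∀ i j y, HasGradientAt (f i j) (g i j y) y)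
    (hlip : ∀ i j y z, ‖g i j y - g i j z‖ ≤ L * ‖y - z‖) {xstar : E}
    (hstat : ∑ i, ∑ j, g i j xstar = 0) (x : E) :
    ∑ i, ∑ j, ‖g i j x - g i j xstar‖ ^ 2 ≤
      2 * L * (∑ i, ∑ j, f i j x - ∑ i, ∑ j, f i j xstar) := by
  calc ∑ i, ∑ j, ‖g i j x - g i j xstar‖ ^ 2
      ≤ ∑ i, ∑ j, 2 * L * (f i j x - f i j xstar - ⟪g i j xstar, x - xstar⟫) := by
        gcongr with i _ j
        exact (hconv i j).norm_sub_gradient_sq_le (hgrad i j) hL (hlip i j) xstar x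
    _ = 2 * L * (∑ i, ∑ j, f i j x - ∑ i, ∑ j, f i j xstar -
          ⟪∑ i, ∑ j, g i j xstar, x - xstar⟫) := by
        simp only [sum_inner, mul_sub, Finset.mul_sum, Finset.sum_sub_distrib]
    _ = 2 * L * (∑ i, ∑ j, f i j x - ∑ i, ∑ j, f i j xstar) := by
        rw [hstat, inner_zero_left, sub_zero]

end SmoothConvex

theorem norm_sum_sq_le_card_mul_sum_norm_sq {τ E : Type*} [Fintype τ] [SeminormedAddCommGroup E]
    (v : τ → E) : ‖∑ i, v i‖ ^ 2 ≤ card τ * ∑ i, ‖v i‖ ^ 2 := by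
  calc ‖∑ i, v i‖ ^ 2 ≤ (∑ i, ‖v i‖) ^ 2 := by gcongr; exact norm_sum_le _ _
    _ ≤ card τ * ∑ i, ‖v i‖ ^ 2 := sq_sum_le_card_mul_sum_sq

section Centered

variable {κ E : Type*} [Fintype κ]

noncomputable def centered [AddCommGroup E] [Module ℝ E] (v : κ → E) (j : κ) : E :=
  v j - (card κ : ℝ)⁻¹ • ∑ k, v k

theorem sum_centered [Nonempty κ] [AddCommGroup E] [Module ℝ E] (v : κ → E) :
    ∑ j, centered v j = 0 := by
  simp only [centered, Finset.sum_sub_distrib, sum_const, card_univ, ← Nat.cast_smul_eq_nsmul ℝ]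
  rw [smul_inv_smul₀ (Nat.cast_ne_zero.2 card_ne_zero), sub_self]

variable [NormedAddCommGroup E] [InnerProductSpace ℝ E]

theorem sum_norm_sub_sq_of_sum_eq (v : κ → E) {μ : E} (hμ : ∑ k, v k = (card κ : ℝ) • μ) :
    ∑ j, ‖v j - μ‖ ^ 2 = ∑ j, ‖v j‖ ^ 2 - card κ * ‖μ‖ ^ 2 := by
  simp only [norm_sub_sq_real, Finset.sum_add_distrib, Finset.sum_sub_distrib, ← Finset.mul_sum,
    ← sum_inner, hμ, sum_const, card_univ, nsmul_eq_mul, real_inner_smul_left,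
    real_inner_self_eq_norm_sq]
  ring

theorem sum_norm_centered_sq_le [Nonempty κ] (v : κ → E) :
    ∑ j, ‖centered v j‖ ^ 2 ≤ ∑ j, ‖v j‖ ^ 2 := by
  simp only [centered]
  rw [sum_norm_sub_sq_of_sum_eq v (smul_inv_smul₀ (Nat.cast_ne_zero.2 card_ne_zero) _).symm]
  have : 0 ≤ (card κ : ℝ) * ‖(card κ : ℝ)⁻¹ • ∑ k, v k‖ ^ 2 := by positivity
  linarith

end Centered

section UniformProduct

variable {ι κ : Type*} [Fintype ι] [DecidableEq ι] [Fintype κ]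

theorem inv_card_smul_sum_pi_apply [Nonempty κ] {M : Type*} [AddCommGroup M] [Module ℝ M]
    (φ : κ → M) (i : ι) :
    (card (ι → κ) : ℝ)⁻¹ • ∑ l : ι → κ, φ (l i) = (card κ : ℝ)⁻¹ • ∑ j, φ j := by
  have hι : card ι = card ι - 1 + 1 := (Nat.sub_add_cancel (card_pos_iff.2 ⟨i⟩)).symm
  have hκ : (card κ : ℝ) ≠ 0 := Nat.cast_ne_zero.2 card_ne_zero
  have hsum := Fintype.sum_piFinset_apply φ univ i
  rw [piFinset_univ] at hsum
  rw [hsum, card_univ, ← Nat.cast_smul_eq_nsmul ℝ, smul_smul, card_fun, hι]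
  push_cast
  rw [pow_succ, mul_inv, mul_right_comm, inv_mul_cancel₀ (pow_ne_zero _ hκ), one_mul]

theorem inv_card_mul_sum_pi_norm_sum_apply_sq_le [Nonempty κ] {E : Type*} [SeminormedAddCommGroup E]
    (a : ι → κ → E) :
    (card (ι → κ) : ℝ)⁻¹ * ∑ l : ι → κ, ‖∑ i, a i (l i)‖ ^ 2 ≤
      card ι * ∑ i, (card κ : ℝ)⁻¹ * ∑ j, ‖a i j‖ ^ 2 := by
  calc (card (ι → κ) : ℝ)⁻¹ * ∑ l : ι → κ, ‖∑ i, a i (l i)‖ ^ 2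
      ≤ (card (ι → κ) : ℝ)⁻¹ * ∑ l : ι → κ, card ι * ∑ i, ‖a i (l i)‖ ^ 2 := by
        gcongr with l
        exact norm_sum_sq_le_card_mul_sum_norm_sq _
    _ = card ι * ∑ i, (card (ι → κ) : ℝ)⁻¹ * ∑ l : ι → κ, ‖a i (l i)‖ ^ 2 := by
        simp only [Finset.mul_sum]
        rw [Finset.sum_comm]
        exact sum_congr rfl fun _ _ ↦ sum_congr rfl fun _ _ ↦ by ring
    _ = card ι * ∑ i, (card κ : ℝ)⁻¹ * ∑ j, ‖a i j‖ ^ 2 := by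
        congr 1
        exact sum_congr rfl fun i _ ↦ inv_card_smul_sum_pi_apply (fun j ↦ ‖a i j‖ ^ 2) i

variable {E : Type*} [NormedAddCommGroup E] [InnerProductSpace ℝ E]

theorem sum_pi_inner_apply_eq_zero {i i' : ι} (hi : i' ≠ i) {φ ψ : κ → E}
    (hφ : ∑ j, φ j = 0) : ∑ l : ι → κ, ⟪φ (l i), ψ (l i')⟫ = 0 := by
  rw [← (Equiv.funSplitAt i κ).symm.sum_comp, Fintype.sum_prod_type, Finset.sum_comm]
  refine Finset.sum_eq_zero fun r _ ↦ ?_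
  simp [Equiv.funSplitAt, Equiv.piSplitAt, hi, ← sum_inner, hφ]

theorem inv_card_mul_sum_pi_norm_sum_apply_sq [Nonempty κ] {ξ : ι → κ → E}
    (hξ : ∀ i, ∑ j, ξ i j = 0) :
    (card (ι → κ) : ℝ)⁻¹ * ∑ l : ι → κ, ‖∑ i, ξ i (l i)‖ ^ 2 =
      ∑ i, (card κ : ℝ)⁻¹ * ∑ j, ‖ξ i j‖ ^ 2 := by
  have hexpand : ∀ l : ι → κ,
      ‖∑ i, ξ i (l i)‖ ^ 2 = ∑ i, ∑ i', ⟪ξ i (l i), ξ i' (l i')⟫ := by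
    intro l
    simp_rw [← real_inner_self_eq_norm_sq, sum_inner, inner_sum]
  simp_rw [hexpand]
  rw [Finset.sum_comm, Finset.mul_sum]
  refine Finset.sum_congr rfl fun i _ ↦ ?_
  rw [Finset.sum_comm, Finset.sum_eq_single i
    (fun i' _ hi ↦ sum_pi_inner_apply_eq_zero hi (hξ i)) (by simp)]
  simpa [real_inner_self_eq_norm_sq] using inv_card_smul_sum_pi_apply (fun j ↦ ‖ξ i j‖ ^ 2) i

theorem inv_card_mul_sum_norm_smul_sub_sq_le [Nonempty κ] (a ξ : ι → κ → E)
    (hξ : ∀ i, ∑ j, ξ i j = 0) :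
    (card (ι → κ) : ℝ)⁻¹ *
        ∑ l : ι → κ, ‖(card ι : ℝ)⁻¹ • (∑ i, a i (l i) - ∑ i, ξ i (l i))‖ ^ 2 ≤
      2 * (1 / (card ι * card κ) * ∑ i, ∑ j, ‖a i j‖ ^ 2) +
      2 * (1 / (card ι * card κ) * ∑ i, ∑ j, ‖ξ i j‖ ^ 2) := by
  set P : ℝ := (card (ι → κ) : ℝ)⁻¹
  set N : ℝ := card ι
  set M : ℝ := card κ
  have hsplit : ∀ l : ι → κ, ‖N⁻¹ • (∑ i, a i (l i) - ∑ i, ξ i (l i))‖ ^ 2 ≤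
      N⁻¹ ^ 2 * (2 * ‖∑ i, a i (l i)‖ ^ 2 + 2 * ‖∑ i, ξ i (l i)‖ ^ 2) := by
    intro l
    rw [norm_smul, mul_pow, norm_inv, RCLike.norm_natCast]
    gcongr
    calc _ ≤ (‖∑ i, a i (l i)‖ + ‖∑ i, ξ i (l i)‖) ^ 2 := by gcongr; exact norm_sub_le _ _
      _ ≤ _ := add_sq_le.trans_eq (mul_add _ _ _)
  have hN : N⁻¹ ^ 2 * N = N⁻¹ := by simpa [sq] using mul_self_mul_inv N⁻¹
  have hN' : N⁻¹ ^ 2 ≤ N⁻¹ := pow_le_of_le_one (by positivity) (Nat.cast_inv_le_one _) two_ne_zero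
  calc P * ∑ l : ι → κ, ‖N⁻¹ • (∑ i, a i (l i) - ∑ i, ξ i (l i))‖ ^ 2
      ≤ P * ∑ l : ι → κ, N⁻¹ ^ 2 * (2 * ‖∑ i, a i (l i)‖ ^ 2 + 2 * ‖∑ i, ξ i (l i)‖ ^ 2) := by
        gcongr with l
        exact hsplit l
    _ = N⁻¹ ^ 2 * (2 * (P * ∑ l : ι → κ, ‖∑ i, a i (l i)‖ ^ 2) +
          2 * (P * ∑ l : ι → κ, ‖∑ i, ξ i (l i)‖ ^ 2)) := by
        simp only [← Finset.mul_sum, Finset.sum_add_distrib]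
        ring
    _ ≤ N⁻¹ ^ 2 * (2 * (N * ∑ i, M⁻¹ * ∑ j, ‖a i j‖ ^ 2) + 2 * ∑ i, M⁻¹ * ∑ j, ‖ξ i j‖ ^ 2) := by
        rw [inv_card_mul_sum_pi_norm_sum_apply_sq hξ]
        gcongr _ * (2 * ?_ + _)
        exact inv_card_mul_sum_pi_norm_sum_apply_sq_le a
    _ ≤ _ := by
        simp only [← Finset.mul_sum, one_div, mul_inv]
        have hξ_nonneg : 0 ≤ M⁻¹ * ∑ i, ∑ j, ‖ξ i j‖ ^ 2 := by positivity
        linear_combination (2 * (M⁻¹ * ∑ i, ∑ j, ‖a i j‖ ^ 2)) * hN +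
          2 * mul_le_mul_of_nonneg_right hN' hξ_nonneg

end UniformProduct

section LSVRG

variable {ι κ : Type*} [Fintype ι] [Fintype κ]

/-- `l i` is the index sampled on worker `i`; expectations over the independent uniform
samples are averages over all `l : ι → κ`. -/
noncomputable def lsvrgEstimator {E : Type*} [AddCommGroup E] [Module ℝ E]
    (g : ι → κ → E → E) (x : E) (w : ι → E) (l : ι → κ) : E :=
  (card ι : ℝ)⁻¹ • ∑ i, (g i (l i) x - g i (l i) (w i) + (card κ : ℝ)⁻¹ • ∑ j, g i j (w i))

theorem inv_card_smul_sum_lsvrgEstimator [DecidableEq ι] [Nonempty κ] {E : Type*}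
    [AddCommGroup E] [Module ℝ E] (g : ι → κ → E → E) (x : E) (w : ι → E) :
    (card (ι → κ) : ℝ)⁻¹ • ∑ l, lsvrgEstimator g x w l =
      (card ι : ℝ)⁻¹ • ∑ i, (card κ : ℝ)⁻¹ • ∑ j, g i j x := by
  have hcentered : ∀ l : ι → κ, lsvrgEstimator g x w l =
      (card ι : ℝ)⁻¹ • ∑ i, (g i (l i) x - centered (fun j ↦ g i j (w i)) (l i)) := by
    simp only [lsvrgEstimator, centered, sub_add, implies_true]
  simp only [hcentered]
  rw [← Finset.smul_sum, Finset.sum_comm, smul_comm, Finset.smul_sum]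
  congr 1
  refine Finset.sum_congr rfl fun i _ ↦ ?_
  rw [inv_card_smul_sum_pi_apply (fun j ↦ g i j x - centered (fun j ↦ g i j (w i)) j) i,
    Finset.sum_sub_distrib, sum_centered, sub_zero]

theorem lsvrgEstimator_eq_of_sum_sum_eq_zero {E : Type*} [AddCommGroup E] [Module ℝ E]
    (g : ι → κ → E → E) (x : E) (w : ι → E) {xstar : E} (hstat : ∑ i, ∑ j, g i j xstar = 0)
    (l : ι → κ) :
    lsvrgEstimator g x w l = (card ι : ℝ)⁻¹ • (∑ i, (g i (l i) x - g i (l i) xstar) -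
      ∑ i, centered (fun j ↦ g i j (w i) - g i j xstar) (l i)) := by
  rw [lsvrgEstimator]
  congr 1
  simp only [centered, Finset.sum_sub_distrib, Finset.sum_add_distrib, smul_sub, ← Finset.smul_sum,
    hstat, smul_zero]
  abel

theorem inv_card_mul_sum_norm_lsvrgEstimator_sq_le [DecidableEq ι] [Nonempty κ] {E : Type*}
    [NormedAddCommGroup E] [InnerProductSpace ℝ E] (g : ι → κ → E → E) (x : E) (w : ι → E)
    {xstar : E} (hstat : ∑ i, ∑ j, g i j xstar = 0) :
    (card (ι → κ) : ℝ)⁻¹ * ∑ l, ‖lsvrgEstimator g x w l‖ ^ 2 ≤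
      2 * ((1 / (card ι * card κ) : ℝ) * ∑ i, ∑ j, ‖g i j x - g i j xstar‖ ^ 2) +
      2 * ((1 / (card ι * card κ) : ℝ) * ∑ i, ∑ j, ‖g i j (w i) - g i j xstar‖ ^ 2) := by
  simp only [lsvrgEstimator_eq_of_sum_sum_eq_zero g x w hstat]
  refine (inv_card_mul_sum_norm_smul_sub_sq_le (fun i j ↦ g i j x - g i j xstar)
    (fun i ↦ centered fun j ↦ g i j (w i) - g i j xstar) fun i ↦ sum_centered _).trans ?_
  gcongr _ + 2 * (_ * ∑ i, ?_)
  exact sum_norm_centered_sq_le _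

end LSVRG

theorem lsvrg_estimator_unbiased_and_second_moment (d n m : ℕ) (hn : 0 < n) (hm : 0 < m)
    (L : ℝ) (hL : 0 < L)
    (f : Fin n → Fin m → EuclideanSpace ℝ (Fin d) → ℝ)
    (g : Fin n → Fin m → EuclideanSpace ℝ (Fin d) → EuclideanSpace ℝ (Fin d))
    (hconv : ∀ i j, ConvexOn ℝ Set.univ (f i j))
    (hgrad : ∀ i j y, HasGradientAt (f i j) (g i j y) y)
    (hlip : ∀ i j y z, ‖g i j y - g i j z‖ ≤ L * ‖y - z‖)
    (xstar : EuclideanSpace ℝ (Fin d))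
    (hmin : ∀ y, (1 / (n * m) : ℝ) * ∑ i, ∑ j, f i j xstar
        ≤ (1 / (n * m) : ℝ) * ∑ i, ∑ j, f i j y)
    (x : EuclideanSpace ℝ (Fin d)) (w : Fin n → EuclideanSpace ℝ (Fin d))
    (G : (Fin n → Fin m) → EuclideanSpace ℝ (Fin d))
    (hG : ∀ l : Fin n → Fin m,
        G l = (n : ℝ)⁻¹ • ∑ i, (g i (l i) x - g i (l i) (w i)
                + (m : ℝ)⁻¹ • ∑ j, g i j (w i))) :
    ((Fintype.card (Fin n → Fin m) : ℝ)⁻¹ • ∑ l : Fin n → Fin m, G l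
        = (n : ℝ)⁻¹ • ∑ i, (m : ℝ)⁻¹ • ∑ j, g i j x)
    ∧ ((Fintype.card (Fin n → Fin m) : ℝ)⁻¹ * ∑ l : Fin n → Fin m, ‖G l‖ ^ 2
        ≤ 4 * L * ((1 / (n * m) : ℝ) * ∑ i, ∑ j, f i j x
                    - (1 / (n * m) : ℝ) * ∑ i, ∑ j, f i j xstar)
          + 2 * ((1 / (n * m) : ℝ) * ∑ i, ∑ j, ‖g i j (w i) - g i j xstar‖ ^ 2)) := by
  have : Nonempty (Fin m) := Fin.pos_iff_nonempty.mp hm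
  have hstat : ∑ i, ∑ j, g i j xstar = 0 :=
    IsLocalMin.hasGradientAt_eq_zero (f := fun y ↦ ∑ i, ∑ j, f i j y)
      (Filter.Eventually.of_forall fun y ↦ le_of_mul_le_mul_left (hmin y) (by positivity))
      (HasGradientAt.sum fun i _ ↦ HasGradientAt.sum fun j _ ↦ hgrad i j xstar)
  obtain rfl : G = lsvrgEstimator g x w := funext fun l ↦ by simp [hG, lsvrgEstimator]
  refine ⟨by simpa using inv_card_smul_sum_lsvrgEstimator g x w, ?_⟩
  have hsecond := inv_card_mul_sum_norm_lsvrgEstimator_sq_le g x w hstat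
  have hcoco := sum_sum_norm_sub_gradient_sq_le hL hconv hgrad hlip hstat x
  simp only [Fintype.card_fin] at hsecond
  have hc : (0 : ℝ) ≤ 1 / (n * m) := by positivity
  linear_combination hsecond + 2 * mul_le_mul_of_nonneg_left hcoco hc
end

section
/- Let C : R^d → R^d be a (possibly random) δ-contractive compressor, i.e., E‖C(x) − x‖² ≤ (1 − δ)‖x‖² for all x, with 0 < δ ≤ 1. For the error-feedback recursion e⁺ = e + γg − C(e + γg), where g = ḡ + ζ with Eζ = 0 (conditionally), one has E‖e⁺‖² ≤ (1 − δ/2)E‖e‖² + (2γ²(1−δ)/δ)E‖ḡ‖² + (1−δ)γ²E‖ζ‖². -/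
/-!
Apply the contraction property of `C` at the point `v = e + γ g` for every fixed outcome of the
gradient: this costs a factor `1 - δ` of `E‖v‖²`. Since the noise `γζ` is orthogonal in `L²` to
`e + γḡ`, `E‖v‖²` splits as `E‖e + γḡ‖² + γ² E‖ζ‖²`. Finally Young's inequality with weight
`β = δ / (2(1 - δ))` gives `(1 - δ)‖x + y‖² ≤ (1 - δ/2)‖x‖² + (2(1 - δ)/δ)‖y‖²`.
-/

open MeasureTheory
open scoped RealInnerProductSpace

theorem one_sub_mul_add_sq_le {δ : ℝ} (hδ0 : 0 < δ) (hδ1 : δ ≤ 1) (a b : ℝ) :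
    (1 - δ) * (a + b) ^ 2 ≤ (1 - δ / 2) * a ^ 2 + 2 * (1 - δ) / δ * b ^ 2 := by
  have hgap : (1 - δ / 2) * a ^ 2 + 2 * (1 - δ) / δ * b ^ 2 - (1 - δ) * (a + b) ^ 2
      = ((δ * a - 2 * (1 - δ) * b) ^ 2 / 2 + δ * (1 - δ) * b ^ 2) / δ := by
    field_simp
    ring
  rw [← sub_nonneg, hgap]
  have hδ1' : 0 ≤ 1 - δ := sub_nonneg.2 hδ1
  positivity

theorem one_sub_mul_norm_add_sq_le {E : Type*} [SeminormedAddCommGroup E] {δ : ℝ}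
    (hδ0 : 0 < δ) (hδ1 : δ ≤ 1) (x y : E) :
    (1 - δ) * ‖x + y‖ ^ 2 ≤ (1 - δ / 2) * ‖x‖ ^ 2 + 2 * (1 - δ) / δ * ‖y‖ ^ 2 :=
  (mul_le_mul_of_nonneg_left (pow_le_pow_left₀ (norm_nonneg _) (norm_add_le x y) 2)
    (sub_nonneg.2 hδ1)).trans (one_sub_mul_add_sq_le hδ0 hδ1 _ _)

section Integrals

variable {α E : Type*} [MeasurableSpace α] {μ : Measure α} [NormedAddCommGroup E]

theorem integral_norm_smul_sq [NormedSpace ℝ E] (c : ℝ) (f : α → E) :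
    ∫ w, ‖c • f w‖ ^ 2 ∂μ = c ^ 2 * ∫ w, ‖f w‖ ^ 2 ∂μ := by
  simp_rw [norm_smul, mul_pow, Real.norm_eq_abs, sq_abs]
  exact integral_const_mul _ _

theorem integral_norm_add_sq [InnerProductSpace ℝ E] {f g : α → E}
    (hf : MemLp f 2 μ) (hg : MemLp g 2 μ) :
    ∫ w, ‖f w + g w‖ ^ 2 ∂μ
      = ∫ w, ‖f w‖ ^ 2 ∂μ + 2 * ∫ w, ⟪f w, g w⟫ ∂μ + ∫ w, ‖g w‖ ^ 2 ∂μ := by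
  have hinner : ∀ w, 2 * ⟪f w, g w⟫ = ‖f w + g w‖ ^ 2 - ‖f w‖ ^ 2 - ‖g w‖ ^ 2 := fun w => by
    rw [norm_add_sq_real]
    ring
  have hfg2 : Integrable (fun w => ‖f w + g w‖ ^ 2) μ := (hf.add hg).norm.integrable_sq
  have hdiff : Integrable (fun w => ‖f w + g w‖ ^ 2 - ‖f w‖ ^ 2) μ :=
    hfg2.sub hf.norm.integrable_sq
  rw [← integral_const_mul, integral_congr_ae (ae_of_all _ hinner),
    integral_sub hdiff hg.norm.integrable_sq, integral_sub hfg2 hf.norm.integrable_sq]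
  ring

theorem integral_one_sub_mul_norm_add_sq_le {δ : ℝ} (hδ0 : 0 < δ) (hδ1 : δ ≤ 1) {f g : α → E}
    (hf : MemLp f 2 μ) (hg : MemLp g 2 μ) :
    (1 - δ) * ∫ w, ‖f w + g w‖ ^ 2 ∂μ
      ≤ (1 - δ / 2) * ∫ w, ‖f w‖ ^ 2 ∂μ + 2 * (1 - δ) / δ * ∫ w, ‖g w‖ ^ 2 ∂μ := by
  have hf2 := hf.norm.integrable_sq.const_mul (1 - δ / 2)
  have hg2 := hg.norm.integrable_sq.const_mul (2 * (1 - δ) / δ)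
  rw [← integral_const_mul, ← integral_const_mul, ← integral_const_mul, ← integral_add hf2 hg2]
  exact integral_mono ((hf.add hg).norm.integrable_sq.const_mul _) (hf2.add hg2)
    fun w => one_sub_mul_norm_add_sq_le hδ0 hδ1 (f w) (g w)

end Integrals

theorem integral_prod_le_of_integral_le {α β : Type*} [MeasurableSpace α] [MeasurableSpace β]
    {μ : Measure α} {ν : Measure β} [SFinite μ] [SFinite ν] {f : α × β → ℝ} {g : α → ℝ}
    (hf : 0 ≤ f) (hg : Integrable g μ) (hfg : ∀ x, ∫ y, f (x, y) ∂ν ≤ g x) :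
    ∫ z, f z ∂μ.prod ν ≤ ∫ x, g x ∂μ := by
  by_cases hint : Integrable f (μ.prod ν)
  · rw [integral_prod f hint]
    exact integral_mono hint.integral_prod_left hg hfg
  · rw [integral_undef hint]
    exact integral_nonneg fun x => (integral_nonneg fun y => hf (x, y)).trans (hfg x)

theorem integral_prod_norm_sub_compressor_sq_le {Ω₁ Ω₂ E : Type*}
    [MeasurableSpace Ω₁] [MeasurableSpace Ω₂] {μ₁ : Measure Ω₁} {μ₂ : Measure Ω₂}
    [SFinite μ₁] [SFinite μ₂] [NormedAddCommGroup E] {δ : ℝ} {C : E → Ω₂ → E}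
    (hC : ∀ v, ∫ w, ‖C v w - v‖ ^ 2 ∂μ₂ ≤ (1 - δ) * ‖v‖ ^ 2) {v : Ω₁ → E} (hv : MemLp v 2 μ₁) :
    ∫ q, ‖v q.1 - C (v q.1) q.2‖ ^ 2 ∂(μ₁.prod μ₂) ≤ (1 - δ) * ∫ w, ‖v w‖ ^ 2 ∂μ₁ := by
  rw [← integral_const_mul]
  exact integral_prod_le_of_integral_le (fun q => by positivity)
    (hv.norm.integrable_sq.const_mul _) fun w => by simpa only [norm_sub_rev] using hC (v w)

theorem error_feedback_contraction_general {Ω₁ Ω₂ : Type*}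
    [MeasurableSpace Ω₁] [MeasurableSpace Ω₂]
    (μ₁ : Measure Ω₁) (μ₂ : Measure Ω₂)
    [IsProbabilityMeasure μ₁] [IsProbabilityMeasure μ₂]
    (d : ℕ) (δ γ : ℝ) (hδ0 : 0 < δ) (hδ1 : δ ≤ 1)
    (e gbar ζ : Ω₁ → EuclideanSpace ℝ (Fin d))
    (C : EuclideanSpace ℝ (Fin d) → Ω₂ → EuclideanSpace ℝ (Fin d))
    (heL2 : MemLp e 2 μ₁) (hgbarL2 : MemLp gbar 2 μ₁) (hζL2 : MemLp ζ 2 μ₁)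
    (horth : ∫ w, ⟪e w + γ • gbar w, ζ w⟫ ∂μ₁ = 0)
    (hC : ∀ v, ∫ w, ‖C v w - v‖ ^ 2 ∂μ₂ ≤ (1 - δ) * ‖v‖ ^ 2) :
    ∫ q, ‖(e q.1 + γ • (gbar q.1 + ζ q.1))
            - C (e q.1 + γ • (gbar q.1 + ζ q.1)) q.2‖ ^ 2 ∂(μ₁.prod μ₂)
      ≤ (1 - δ / 2) * ∫ w, ‖e w‖ ^ 2 ∂μ₁
        + (2 * γ ^ 2 * (1 - δ) / δ) * ∫ w, ‖gbar w‖ ^ 2 ∂μ₁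
        + (1 - δ) * γ ^ 2 * ∫ w, ‖ζ w‖ ^ 2 ∂μ₁ := by
  set a := fun w => e w + γ • gbar w
  have haL2 : MemLp a 2 μ₁ := heL2.add (hgbarL2.const_smul γ)
  have hsplit : ∀ w, e w + γ • (gbar w + ζ w) = a w + γ • ζ w := fun w => by
    simp only [a, smul_add, add_assoc]
  have hnoise : ∫ w, ‖a w + γ • ζ w‖ ^ 2 ∂μ₁
      = ∫ w, ‖a w‖ ^ 2 ∂μ₁ + γ ^ 2 * ∫ w, ‖ζ w‖ ^ 2 ∂μ₁ := by
    rw [integral_norm_add_sq (g := fun w => γ • ζ w) haL2 (hζL2.const_smul γ), integral_norm_smul_sq]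
    simp_rw [real_inner_smul_right, integral_const_mul]
    rw [show ∫ w, ⟪a w, ζ w⟫ ∂μ₁ = 0 from horth]
    ring
  have hbias := integral_one_sub_mul_norm_add_sq_le (g := fun w => γ • gbar w) hδ0 hδ1 heL2
    (hgbarL2.const_smul γ)
  rw [integral_norm_smul_sq] at hbias
  calc _ ≤ (1 - δ) * ∫ w, ‖e w + γ • (gbar w + ζ w)‖ ^ 2 ∂μ₁ :=
        integral_prod_norm_sub_compressor_sq_le hC (heL2.add ((hgbarL2.add hζL2).const_smul γ))
    _ = (1 - δ) * ∫ w, ‖a w‖ ^ 2 ∂μ₁ + (1 - δ) * γ ^ 2 * ∫ w, ‖ζ w‖ ^ 2 ∂μ₁ := by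
        simp_rw [hsplit, hnoise]
        ring
    _ ≤ _ := by linear_combination hbias

theorem error_feedback_contraction {Ω₁ Ω₂ : Type*}
    [MeasurableSpace Ω₁] [MeasurableSpace Ω₂]
    (μ₁ : Measure Ω₁) (μ₂ : Measure Ω₂)
    [IsProbabilityMeasure μ₁] [IsProbabilityMeasure μ₂]
    (d : ℕ) (δ γ : ℝ) (hδ0 : 0 < δ) (hδ1 : δ ≤ 1) (hγ : 0 < γ)
    (e gbar ζ : Ω₁ → EuclideanSpace ℝ (Fin d))
    (C : EuclideanSpace ℝ (Fin d) → Ω₂ → EuclideanSpace ℝ (Fin d))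
    (heL2 : MemLp e 2 μ₁) (hgbarL2 : MemLp gbar 2 μ₁) (hζL2 : MemLp ζ 2 μ₁)
    (hCmeas : Measurable fun q : EuclideanSpace ℝ (Fin d) × Ω₂ => C q.1 q.2)
    (hζmean : ∫ w, ζ w ∂μ₁ = 0)
    (horth : ∫ w, ⟪e w + γ • gbar w, ζ w⟫ ∂μ₁ = 0)
    (hC : ∀ v, ∫ w, ‖C v w - v‖ ^ 2 ∂μ₂ ≤ (1 - δ) * ‖v‖ ^ 2) :
    ∫ q, ‖(e q.1 + γ • (gbar q.1 + ζ q.1))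
            - C (e q.1 + γ • (gbar q.1 + ζ q.1)) q.2‖ ^ 2 ∂(μ₁.prod μ₂)
      ≤ (1 - δ / 2) * ∫ w, ‖e w‖ ^ 2 ∂μ₁
        + (2 * γ ^ 2 * (1 - δ) / δ) * ∫ w, ‖gbar w‖ ^ 2 ∂μ₁
        + (1 - δ) * γ ^ 2 * ∫ w, ‖ζ w‖ ^ 2 ∂μ₁ :=
  error_feedback_contraction_general μ₁ μ₂ d δ γ hδ0 hδ1 e gbar ζ C heL2 hgbarL2 hζL2 horth hC
end
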